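/- arXiv:2301.02386 — 7 statements merged into one kernel-verified Lean document; each statement's English description precedes it below -/
import Mathlib

section
/- For x' ∈ ℂⁿ and λ > 0, if ‖x'‖_∞ ≤ (1−α)λ with 0 ≤ α ≤ 1, then x* = 0 is a minimizer of the function x ↦ λ(‖x‖₁ − α‖x‖₂) + (1/2)‖x − x'‖₂². -/
open Finset

/-- If `‖x'‖_∞ ≤ (1-α)λ`, then `x* = 0` minimizes
`x ↦ λ(‖x‖₁ - α‖x‖₂) + (1/2)‖x - x'‖₂²`. -/
theorem stmt1 (n : ℕ) (x' : Fin n → ℂ) (lam α : ℝ) (hlam : 0 < lam)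
    (hα : α ∈ Set.Icc (0 : ℝ) 1)
    (hinf : ∀ i, ‖x' i‖ ≤ (1 - α) * lam) :
    ∀ x : Fin n → ℂ,
      lam * ((∑ i, ‖(0 : Fin n → ℂ) i‖) -
          α * Real.sqrt (∑ i, ‖(0 : Fin n → ℂ) i‖ ^ 2)) +
        (1 / 2) * ∑ i, ‖(0 : Fin n → ℂ) i - x' i‖ ^ 2 ≤
      lam * ((∑ i, ‖x i‖) -
          α * Real.sqrt (∑ i, ‖x i‖ ^ 2)) +
        (1 / 2) * ∑ i, ‖x i - x' i‖ ^ 2 := by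
  intro x
  have hanonneg : ∀ i, (0:ℝ) ≤ ‖x i‖ := fun i => norm_nonneg _
  -- √(∑ aᵢ²) ≤ ∑ aᵢ
  have hsumnonneg : 0 ≤ ∑ i, ‖x i‖ := Finset.sum_nonneg fun i _ => hanonneg i
  have hsq : (∑ i, ‖x i‖ ^ 2) ≤ (∑ i, ‖x i‖) ^ 2 := by
    rw [sq (∑ i, ‖x i‖), Finset.sum_mul]
    refine Finset.sum_le_sum fun i _ => ?_
    rw [sq]
    exact mul_le_mul_of_nonneg_left
      (Finset.single_le_sum (fun j _ => hanonneg j) (Finset.mem_univ i)) (hanonneg i)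
  have key : Real.sqrt (∑ i, ‖x i‖ ^ 2) ≤ ∑ i, ‖x i‖ := by
    calc Real.sqrt (∑ i, ‖x i‖ ^ 2) ≤ Real.sqrt ((∑ i, ‖x i‖) ^ 2) := Real.sqrt_le_sqrt hsq
    _ = ∑ i, ‖x i‖ := Real.sqrt_sq hsumnonneg
  -- pointwise lower bound on |xᵢ - x'ᵢ|²
  have hpt : ∀ i, ‖x i‖ ^ 2 - 2 * ((1 - α) * lam) * ‖x i‖ + ‖x' i‖ ^ 2 ≤
      ‖x i - x' i‖ ^ 2 := by
    intro i
    have h1 : (x i * starRingEnd ℂ (x' i)).re ≤ ‖x i‖ * ‖x' i‖ := by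
      calc (x i * starRingEnd ℂ (x' i)).re ≤ ‖x i * starRingEnd ℂ (x' i)‖ :=
            Complex.re_le_norm _
      _ = ‖x i‖ * ‖x' i‖ := by rw [norm_mul, Complex.norm_conj]
    have h2 : ‖x i‖ * ‖x' i‖ ≤ ‖x i‖ * ((1 - α) * lam) :=
      mul_le_mul_of_nonneg_left (hinf i) (hanonneg i)
    have h3 : ‖x i - x' i‖ ^ 2 =
        ‖x i‖ ^ 2 - 2 * (x i * starRingEnd ℂ (x' i)).re + ‖x' i‖ ^ 2 := by
      rw [Complex.sq_norm, Complex.normSq_sub, Complex.sq_norm, Complex.sq_norm]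
      ring_nf
    rw [h3]
    nlinarith
  have hsum : ∑ i, (‖x i‖ ^ 2 - 2 * ((1 - α) * lam) * ‖x i‖ + ‖x' i‖ ^ 2) ≤
      ∑ i, ‖x i - x' i‖ ^ 2 :=
    Finset.sum_le_sum fun i _ => hpt i
  have hexp : ∑ i, (‖x i‖ ^ 2 - 2 * ((1 - α) * lam) * ‖x i‖ + ‖x' i‖ ^ 2) =
      (∑ i, ‖x i‖ ^ 2) - 2 * ((1 - α) * lam) * (∑ i, ‖x i‖) + ∑ i, ‖x' i‖ ^ 2 := by
    rw [Finset.sum_add_distrib, Finset.sum_sub_distrib, ← Finset.mul_sum]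
  rw [hexp] at hsum
  have hsqsum : 0 ≤ ∑ i, ‖x i‖ ^ 2 := Finset.sum_nonneg fun i _ => sq_nonneg _
  simp only [Pi.zero_apply, norm_zero, zero_sub, norm_neg, Finset.sum_const_zero, mul_zero, sub_zero]
  have hz : (∑ _i : Fin n, (0:ℝ) ^ 2) = 0 := by simp
  rw [hz, Real.sqrt_zero]
  have hal : 0 ≤ α * lam := mul_nonneg hα.1 hlam.le
  nlinarith [mul_le_mul_of_nonneg_left key hal]
end

section
/- Let x' ∈ ℂⁿ, λ > 0, 0 ≤ α ≤ 1, and suppose ‖x'‖_∞ > λ. Define ξ ∈ ℂⁿ by ξᵢ = sign(x'ᵢ)·max(|x'ᵢ| − λ, 0), and set x* = (‖ξ‖₂ + αλ)·ξ/‖ξ‖₂. Then x* is a minimizer of x ↦ λ(‖x‖₁ − α‖x‖₂) + (1/2)‖x − x'‖₂². -/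
open Finset

lemma L1 (z w : ℂ) : ‖z - w‖^2 = ‖z‖^2 - 2*(z * (starRingEnd ℂ) w).re + ‖w‖^2 := by
  rw [Complex.sq_norm, Complex.sq_norm, Complex.sq_norm, Complex.normSq_sub]
  ring

lemma L2 (z w : ℂ) : (z * (starRingEnd ℂ) w).re ≤ ‖z‖ * ‖w‖ := by
  calc (z * (starRingEnd ℂ) w).re ≤ ‖z * (starRingEnd ℂ) w‖ := Complex.re_le_norm _
  _ = ‖z‖ * ‖w‖ := by rw [norm_mul, Complex.norm_conj]

lemma normE (n : ℕ) (f : Fin n → ℂ) :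
    ‖(WithLp.equiv 2 (Fin n → ℂ)).symm f‖ = Real.sqrt (∑ i, ‖f i‖^2) := by
  rw [EuclideanSpace.norm_eq]
  simp

lemma mink (n : ℕ) (f g : Fin n → ℂ) :
    Real.sqrt (∑ i, ‖f i‖^2) ≤ Real.sqrt (∑ i, ‖g i‖^2) +
      Real.sqrt (∑ i, ‖f i - g i‖^2) := by
  have h1 := normE n f
  have h2 := normE n g
  have h3 := normE n (fun i => f i - g i)
  have key : (WithLp.equiv 2 (Fin n → ℂ)).symm f =
      (WithLp.equiv 2 (Fin n → ℂ)).symm g + (WithLp.equiv 2 (Fin n → ℂ)).symm (fun i => f i - g i) := by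
    rw [WithLp.equiv_symm_apply, ← WithLp.toLp_add]
    congr 1
    funext i
    simp
  calc Real.sqrt (∑ i, ‖f i‖^2) = ‖(WithLp.equiv 2 (Fin n → ℂ)).symm f‖ := h1.symm
    _ ≤ ‖(WithLp.equiv 2 (Fin n → ℂ)).symm g‖ + ‖(WithLp.equiv 2 (Fin n → ℂ)).symm (fun i => f i - g i)‖ := by
        rw [key]; exact norm_add_le _ _
    _ = _ := by rw [h2, h3]

lemma xi_facts (n : ℕ) (x' : Fin n → ℂ) (lam : ℝ) (hlam : 0 < lam)
    (ξ : Fin n → ℂ)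
    (hξ : ∀ i, ξ i = (if x' i = 0 then 0 else x' i / (‖x' i‖ : ℂ)) *
      ((max (‖x' i‖ - lam) 0 : ℝ) : ℂ)) :
    (∀ i, (ξ i * (starRingEnd ℂ) (x' i)).re = lam * ‖ξ i‖ + ‖ξ i‖^2)
    ∧ (∀ i, ‖ξ i - x' i‖ ≤ lam)
    ∧ (∀ i, lam < ‖x' i‖ → ‖ξ i‖ = ‖x' i‖ - lam) := by
  refine ⟨fun i => ?_, fun i => ?_, fun i hi => ?_⟩
  · rw [hξ i]
    by_cases h0 : x' i = 0
    · simp [h0]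
    · by_cases hle : ‖x' i‖ ≤ lam
      · have : max (‖x' i‖ - lam) 0 = 0 := max_eq_right (by linarith)
        simp [h0, this]
      · have ha : (0:ℝ) < ‖x' i‖ := norm_pos_iff.mpr h0
        have hm : max (‖x' i‖ - lam) 0 = ‖x' i‖ - lam :=
          max_eq_left (by linarith)
        rw [hm, if_neg h0]
        have key : x' i / (‖x' i‖ : ℂ) * ((‖x' i‖ - lam : ℝ) : ℂ)
            * (starRingEnd ℂ) (x' i)
            = ((Complex.normSq (x' i) * ((‖x' i‖ - lam) / ‖x' i‖) : ℝ) : ℂ) := by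
          rw [Complex.ofReal_mul, ← Complex.mul_conj]
          push_cast
          field_simp
        rw [key, Complex.ofReal_re]
        have habs : ‖x' i / (‖x' i‖ : ℂ) * ((‖x' i‖ - lam : ℝ) : ℂ)‖
            = ‖x' i‖ - lam := by
          rw [norm_mul, norm_div, Complex.norm_real, Real.norm_eq_abs, Complex.norm_real, Real.norm_eq_abs,
            abs_of_pos ha, abs_of_pos (by linarith : (0:ℝ) < ‖x' i‖ - lam)]
          field_simp
        rw [habs, Complex.normSq_apply]
        have h2 : (x' i).re^2 + (x' i).im^2 = ‖x' i‖^2 := by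
          rw [Complex.sq_norm, Complex.normSq_apply]; ring
        field_simp
        nlinarith [h2, ha]
  · rw [hξ i]
    by_cases h0 : x' i = 0
    · simp [h0, hlam.le]
    · by_cases hle : ‖x' i‖ ≤ lam
      · have : max (‖x' i‖ - lam) 0 = 0 := max_eq_right (by linarith)
        rw [this]
        simpa using hle
      · have ha : (0:ℝ) < ‖x' i‖ := norm_pos_iff.mpr h0
        have hm : max (‖x' i‖ - lam) 0 = ‖x' i‖ - lam :=
          max_eq_left (by linarith)
        rw [hm, if_neg h0]
        have key : x' i / (‖x' i‖ : ℂ) * ((‖x' i‖ - lam : ℝ) : ℂ) - x' i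
            = x' i * ((-(lam / ‖x' i‖) : ℝ) : ℂ) := by
          have hne : ((‖x' i‖ : ℝ) : ℂ) ≠ 0 := by
            exact_mod_cast Complex.ofReal_ne_zero.2 ha.ne'
          push_cast
          field_simp
          ring
        rw [key, norm_mul, Complex.norm_real, Real.norm_eq_abs, abs_neg, abs_of_pos (by positivity)]
        rw [mul_div_assoc']
        rw [mul_comm, mul_div_assoc]
        field_simp
        exact le_rfl
  · rw [hξ i]
    have h0 : x' i ≠ 0 := by
      intro h; rw [h] at hi; simp at hi; linarith
    have ha : (0:ℝ) < ‖x' i‖ := norm_pos_iff.mpr h0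
    have hm : max (‖x' i‖ - lam) 0 = ‖x' i‖ - lam :=
      max_eq_left (by linarith)
    rw [hm, if_neg h0, norm_mul, norm_div, Complex.norm_real, Real.norm_eq_abs, Complex.norm_real, Real.norm_eq_abs,
      abs_of_pos ha, abs_of_pos (by linarith : (0:ℝ) < ‖x' i‖ - lam)]
    field_simp

/-- If `‖x'‖_∞ > λ`, then `x* = (‖ξ‖₂ + αλ)·ξ/‖ξ‖₂`, with
`ξᵢ = sign(x'ᵢ)·max(|x'ᵢ| - λ, 0)`, minimizes
`x ↦ λ(‖x‖₁ - α‖x‖₂) + (1/2)‖x - x'‖₂²`. -/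
theorem stmt2 (n : ℕ) (x' : Fin n → ℂ) (lam α : ℝ) (hlam : 0 < lam)
    (hα : α ∈ Set.Icc (0 : ℝ) 1)
    (hinf : ∃ i, lam < ‖x' i‖)
    (ξ : Fin n → ℂ)
    (hξ : ∀ i, ξ i = (if x' i = 0 then 0 else x' i / (‖x' i‖ : ℂ)) *
      ((max (‖x' i‖ - lam) 0 : ℝ) : ℂ))
    (xstar : Fin n → ℂ)
    (hx : ∀ i, xstar i =
      (((Real.sqrt (∑ k, ‖ξ k‖ ^ 2) + α * lam) /
        Real.sqrt (∑ k, ‖ξ k‖ ^ 2) : ℝ) : ℂ) * ξ i) :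
    ∀ x : Fin n → ℂ,
      lam * ((∑ i, ‖xstar i‖) -
          α * Real.sqrt (∑ i, ‖xstar i‖ ^ 2)) +
        (1 / 2) * ∑ i, ‖xstar i - x' i‖ ^ 2 ≤
      lam * ((∑ i, ‖x i‖) -
          α * Real.sqrt (∑ i, ‖x i‖ ^ 2)) +
        (1 / 2) * ∑ i, ‖x i - x' i‖ ^ 2 := by
  intro x
  obtain ⟨hα0, hα1⟩ := hα
  obtain ⟨hE, hF, hAbs⟩ := xi_facts n x' lam hlam ξ hξ
  -- positivity of S
  obtain ⟨i0, hi0⟩ := hinf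
  set S := ∑ k, ‖ξ k‖ ^ 2 with hS
  clear_value S
  have hSpos : 0 < S := by
    have h1 : 0 < ‖ξ i0‖ ^ 2 := by
      rw [hAbs i0 hi0]; nlinarith
    have h2 : ‖ξ i0‖ ^ 2 ≤ S := by
      rw [hS]
      exact Finset.single_le_sum (f := fun k => ‖ξ k‖ ^ 2)
        (fun k _ => by positivity) (Finset.mem_univ i0)
    linarith
  set r := Real.sqrt S with hrdef
  clear_value r
  have hr : 0 < r := by rw [hrdef]; exact Real.sqrt_pos.2 hSpos
  have hr2 : r ^ 2 = S := by rw [hrdef]; exact Real.sq_sqrt hSpos.le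
  set c := (r + α * lam) / r with hc
  clear_value c
  have hc0 : 0 < c := by
    rw [hc]
    apply div_pos _ hr
    nlinarith
  have hc1 : 1 ≤ c := by
    rw [hc, le_div_iff₀ hr]
    nlinarith
  have hcr : (c - 1) * r = α * lam := by
    rw [hc, sub_mul, div_mul_cancel₀ _ hr.ne']
    ring
  have hxs : ∀ i, xstar i = (c : ℂ) * ξ i := fun i => hx i
  have habs_xs : ∀ i, ‖xstar i‖ = c * ‖ξ i‖ := by
    intro i
    rw [hxs i, norm_mul, Complex.norm_real, Real.norm_eq_abs, abs_of_pos hc0]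
  -- ℓ2 norm of xstar
  have h2sum : ∑ i, ‖xstar i‖ ^ 2 = c ^ 2 * S := by
    rw [hS, Finset.mul_sum]
    exact Finset.sum_congr rfl fun i _ => by rw [habs_xs i]; ring
  have h2norm : Real.sqrt (∑ i, ‖xstar i‖ ^ 2) = r + α * lam := by
    rw [h2sum, ← hr2]
    rw [← mul_pow, Real.sqrt_sq (by positivity)]
    rw [hc]
    field_simp
  -- per-coordinate equality for xstar
  have hEq : ∀ i, lam * ‖xstar i‖ + (1/2) * ‖xstar i - x' i‖ ^ 2
      = lam * ‖ξ i‖ + (1/2) * ‖ξ i - x' i‖ ^ 2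
        + (1/2) * (c - 1)^2 * ‖ξ i‖ ^ 2 := by
    intro i
    rw [habs_xs i, hxs i, L1 ((c:ℂ) * ξ i) (x' i), L1 (ξ i) (x' i)]
    have hre : ((c:ℂ) * ξ i * (starRingEnd ℂ) (x' i)).re = c * (ξ i * (starRingEnd ℂ) (x' i)).re := by
      rw [mul_assoc, Complex.mul_re, Complex.ofReal_re, Complex.ofReal_im]
      ring
    rw [hre, norm_mul, Complex.norm_real, Real.norm_eq_abs, abs_of_pos hc0, hE i]
    ring
  -- summed equality
  have hGs : lam * (∑ i, ‖xstar i‖) + (1/2) * ∑ i, ‖xstar i - x' i‖ ^ 2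
      = lam * (∑ i, ‖ξ i‖) + (1/2) * ∑ i, ‖ξ i - x' i‖ ^ 2
        + (1/2) * (α * lam)^2 := by
    have hsum := Finset.sum_congr rfl (fun i (_ : i ∈ Finset.univ) => hEq i)
    simp only [Finset.sum_add_distrib, ← Finset.mul_sum] at hsum
    have hSsub : (1/2) * (c - 1)^2 * S = (1/2) * (α * lam)^2 := by
      have : (c - 1)^2 * S = ((c - 1) * r)^2 := by rw [mul_pow, hr2]
      rw [mul_assoc, this, hcr]
    rw [hS] at hSsub
    linarith [hsum]
  -- strong convexity inequality
  have hG1 : lam * (∑ i, ‖ξ i‖) + (1/2) * ∑ i, ‖ξ i - x' i‖ ^ 2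
      + (1/2) * ∑ i, ‖x i - ξ i‖ ^ 2
      ≤ lam * (∑ i, ‖x i‖) + (1/2) * ∑ i, ‖x i - x' i‖ ^ 2 := by
    have key : ∀ i, lam * ‖ξ i‖ + (1/2) * ‖ξ i - x' i‖ ^ 2
        + (1/2) * ‖x i - ξ i‖ ^ 2
        ≤ lam * ‖x i‖ + (1/2) * ‖x i - x' i‖ ^ 2 := by
      intro i
      have f2 : (x i * (starRingEnd ℂ) (x' i - ξ i)).re
          = (x i * (starRingEnd ℂ) (x' i)).re - (x i * (starRingEnd ℂ) (ξ i)).re := by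
        rw [map_sub, mul_sub, Complex.sub_re]
      have f1 : (x i * (starRingEnd ℂ) (x' i - ξ i)).re ≤ ‖x i‖ * lam := by
        calc (x i * (starRingEnd ℂ) (x' i - ξ i)).re
            ≤ ‖x i‖ * ‖x' i - ξ i‖ := L2 _ _
          _ ≤ ‖x i‖ * lam := by
              apply mul_le_mul_of_nonneg_left _ (norm_nonneg _)
              rw [norm_sub_rev]
              exact hF i
      have f3 := hE i
      rw [L1 (ξ i) (x' i), L1 (x i) (ξ i), L1 (x i) (x' i)]
      linarith
    have hsum := Finset.sum_le_sum (fun i (_ : i ∈ Finset.univ) => key i)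
    simp only [Finset.sum_add_distrib, ← Finset.mul_sum] at hsum
    linarith
  -- triangle inequality
  set t := Real.sqrt (∑ i, ‖x i - ξ i‖ ^ 2) with ht
  clear_value t
  have ht0 : 0 ≤ t := by rw [ht]; exact Real.sqrt_nonneg _
  have ht2 : t ^ 2 = ∑ i, ‖x i - ξ i‖ ^ 2 := by
    rw [ht]; exact Real.sq_sqrt (Finset.sum_nonneg fun i _ => by positivity)
  have htri : Real.sqrt (∑ i, ‖x i‖ ^ 2) ≤ r + t := by
    have := mink n x ξ
    rw [← hS, ← hrdef, ← ht] at this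
    exact this
  have hD : lam * α * Real.sqrt (∑ i, ‖x i‖ ^ 2) ≤ lam * α * (r + t) :=
    mul_le_mul_of_nonneg_left htri (by positivity)
  have hsq : 0 ≤ (t - α * lam)^2 := sq_nonneg _
  rw [h2norm]
  nlinarith [hGs, hG1, ht2, hD, hsq, mul_pos hlam hr]
end

section
/- Let x' ∈ ℂⁿ and λ > 0. If x* is a minimizer of x ↦ λ(‖x‖₁ − α‖x‖₂) + (1/2)‖x − x'‖₂² with 0 ≤ α ≤ 1, then for every index i with x*ᵢ ≠ 0 and x'ᵢ ≠ 0, the complex numbers x*ᵢ and x'ᵢ have the same argument, i.e., x*ᵢ/|x*ᵢ| = x'ᵢ/|x'ᵢ|. -/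
open Finset

/-- At a minimizer `x*` of `x ↦ λ(‖x‖₁ - α‖x‖₂) + (1/2)‖x - x'‖₂²`, every entry with
`x*ᵢ ≠ 0` and `x'ᵢ ≠ 0` has the same argument as the corresponding entry of `x'`. -/
theorem stmt3 (n : ℕ) (x' : Fin n → ℂ) (lam α : ℝ) (hlam : 0 < lam)
    (hα : α ∈ Set.Icc (0 : ℝ) 1)
    (xstar : Fin n → ℂ)
    (hmin : ∀ x : Fin n → ℂ,
      lam * ((∑ i, ‖xstar i‖) -
          α * Real.sqrt (∑ i, ‖xstar i‖ ^ 2)) +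
        (1 / 2) * ∑ i, ‖xstar i - x' i‖ ^ 2 ≤
      lam * ((∑ i, ‖x i‖) -
          α * Real.sqrt (∑ i, ‖x i‖ ^ 2)) +
        (1 / 2) * ∑ i, ‖x i - x' i‖ ^ 2)
    (i : Fin n) (h1 : xstar i ≠ 0) (h2 : x' i ≠ 0) :
    xstar i / (‖xstar i‖ : ℂ) = x' i / (‖x' i‖ : ℂ) := by
  set a := xstar i with ha
  set b := x' i with hb
  have ha0 : ‖a‖ ≠ 0 := by simpa using h1
  have hb0 : ‖b‖ ≠ 0 := by simpa using h2
  set u : ℂ := b / (‖b‖ : ℂ) with hu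
  have hbC : (‖b‖ : ℂ) ≠ 0 := by exact_mod_cast hb0
  have hub : (‖b‖ : ℂ) * u = b := by rw [hu]; field_simp
  have huabs : ‖u‖ = 1 := by
    simp [hu, norm_div, div_self hb0]
  set c : ℂ := (‖a‖ : ℂ) * u with hc
  have hcabs : ‖c‖ = ‖a‖ := by
    simp [hc, norm_mul, huabs, Complex.norm_real, abs_of_nonneg (norm_nonneg a)]
  set y : Fin n → ℂ := Function.update xstar i c with hy
  have habs : ∀ j, ‖y j‖ = ‖xstar j‖ := by
    intro j
    by_cases hj : j = i
    · subst hj; simp [hy, hcabs, ← ha]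
    · simp [hy, Function.update_of_ne hj]
  have hsum1 : ∑ j, ‖y j‖ = ∑ j, ‖xstar j‖ :=
    Finset.sum_congr rfl fun j _ => habs j
  have hsum2 : ∑ j, ‖y j‖ ^ 2 = ∑ j, ‖xstar j‖ ^ 2 :=
    Finset.sum_congr rfl fun j _ => by rw [habs j]
  have hkey : ∑ j, ‖xstar j - x' j‖ ^ 2 ≤ ∑ j, ‖y j - x' j‖ ^ 2 := by
    have h := hmin y
    rw [hsum1, hsum2] at h
    linarith
  -- reduce to the i-th term
  have hterm : ‖a - b‖ ^ 2 ≤ ‖c - b‖ ^ 2 := by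
    have e1 : ∑ j, ‖xstar j - x' j‖ ^ 2 =
        ‖a - b‖ ^ 2 + ∑ j ∈ Finset.univ.erase i, ‖xstar j - x' j‖ ^ 2 :=
      (Finset.add_sum_erase _ _ (Finset.mem_univ i)).symm
    have e2 : ∑ j, ‖y j - x' j‖ ^ 2 =
        ‖c - b‖ ^ 2 + ∑ j ∈ Finset.univ.erase i, ‖xstar j - x' j‖ ^ 2 := by
      rw [← Finset.add_sum_erase _ _ (Finset.mem_univ i)]
      congr 1
      · rw [hy, Function.update_self]
      · refine Finset.sum_congr rfl fun j hj => ?_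
        rw [hy, Function.update_of_ne (Finset.ne_of_mem_erase hj)]
    rw [e1, e2] at hkey
    linarith
  have hcb : ‖c - b‖ ^ 2 = (‖a‖ - ‖b‖) ^ 2 := by
    have : c - b = ((‖a‖ - ‖b‖ : ℝ) : ℂ) * u := by
      rw [hc, Complex.ofReal_sub, sub_mul, hub]
    rw [this, norm_mul, huabs, mul_one, Complex.norm_real, Real.norm_eq_abs, sq_abs]
  have hab2 : ‖a - b‖ ^ 2 =
      ‖a‖ ^ 2 + ‖b‖ ^ 2 - 2 * (a * (starRingEnd ℂ) b).re := by
    rw [Complex.sq_norm, Complex.normSq_sub, Complex.sq_norm, Complex.sq_norm]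
  have hre : ‖a‖ * ‖b‖ ≤ (a * (starRingEnd ℂ) b).re := by
    rw [hcb, hab2] at hterm
    nlinarith
  have hre' : (a * (starRingEnd ℂ) b).re ≤ ‖a‖ * ‖b‖ := by
    calc (a * (starRingEnd ℂ) b).re ≤ ‖a * (starRingEnd ℂ) b‖ := Complex.re_le_norm _
      _ = ‖a‖ * ‖b‖ := by simp [norm_mul]
  have hreq : (a * (starRingEnd ℂ) b).re = ‖a‖ * ‖b‖ := le_antisymm hre' hre
  have him : (a * (starRingEnd ℂ) b).im = 0 := by
    have h := Complex.sq_norm (a * (starRingEnd ℂ) b)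
    rw [Complex.normSq_apply, hreq] at h
    have habs' : ‖a * (starRingEnd ℂ) b‖ = ‖a‖ * ‖b‖ := by
      simp [norm_mul]
    rw [habs'] at h
    nlinarith
  have heq : a * (starRingEnd ℂ) b = ((‖a‖ * ‖b‖ : ℝ) : ℂ) := by
    apply Complex.ext
    · simpa using hreq
    · simpa using him
  -- conclude
  have hmul : a * (‖b‖ : ℂ) ^ 2 = (‖a‖ : ℂ) * ((‖b‖ : ℂ) * b) := by
    have hbb : (‖b‖ : ℂ) ^ 2 = b * (starRingEnd ℂ) b := by
      rw [Complex.mul_conj, ← Complex.sq_norm]; norm_cast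
    calc a * (‖b‖ : ℂ) ^ 2 = (a * (starRingEnd ℂ) b) * b := by rw [hbb]; ring
      _ = ((‖a‖ * ‖b‖ : ℝ) : ℂ) * b := by rw [heq]
      _ = (‖a‖ : ℂ) * ((‖b‖ : ℂ) * b) := by push_cast; ring
  have haC : (‖a‖ : ℂ) ≠ 0 := by exact_mod_cast ha0
  rw [div_eq_div_iff haC hbC]
  apply mul_right_cancel₀ hbC
  linear_combination hmul
end

section
/- Let y ∈ ℝⁿ with yᵢ ≥ 0 for all i, and let λ > 0, 0 ≤ α ≤ 1. Then the minimum of ρ ↦ ‖ρ‖₁ − α‖ρ‖₂ + (1/(2λ))‖ρ − y‖₂² over all ρ ∈ ℝⁿ equals the minimum over ρ ∈ ℝⁿ with ρᵢ ≥ 0, i.e., every minimizer over ℝⁿ has all nonnegative entries. -/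
open Finset

/-- No boundedness is needed: if one range is unbounded below so is the other, and both
infima are then the same junk value. -/
theorem iInf_eq_iInf_subtype_of_forall_exists_le {ι α : Type*}
    [ConditionallyCompleteLinearOrder α] {p : ι → Prop} (f : ι → α)
    (h : ∀ i, ∃ j, p j ∧ f j ≤ f i) :
    ⨅ i, f i = ⨅ j : {i // p i}, f j := by
  refine csInf_eq_csInf_of_forall_exists_le ?_ ?_
  · rintro _ ⟨i, rfl⟩
    obtain ⟨j, hj, hji⟩ := h i
    exact ⟨f j, ⟨⟨j, hj⟩, rfl⟩, hji⟩
  · rintro _ ⟨j, rfl⟩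
    exact ⟨f j, ⟨j, rfl⟩, le_rfl⟩

theorem sq_abs_sub_le_sq_sub {a b : ℝ} (hb : 0 ≤ b) : (|a| - b) ^ 2 ≤ (a - b) ^ 2 := by
  calc (|a| - b) ^ 2 = |(|a| - |b|)| ^ 2 := by rw [sq_abs, abs_of_nonneg hb]
    _ ≤ |a - b| ^ 2 := pow_le_pow_left₀ (abs_nonneg _) (abs_abs_sub_abs_le_abs_sub a b) 2
    _ = (a - b) ^ 2 := sq_abs _

section Objective

variable {ι : Type*} [Fintype ι]

noncomputable def l1SubL2Objective (α lam : ℝ) (y ρ : ι → ℝ) : ℝ :=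
  (∑ i, |ρ i|) - α * Real.sqrt (∑ i, ρ i ^ 2) + (1 / (2 * lam)) * ∑ i, (ρ i - y i) ^ 2

-- Both norms are unchanged by `ρ ↦ |ρ|`, while the fidelity term can only decrease when `y ≥ 0`.
theorem l1SubL2Objective_abs_le {y : ι → ℝ} (hy : ∀ i, 0 ≤ y i) (α : ℝ) {lam : ℝ}
    (hlam : 0 ≤ lam) (ρ : ι → ℝ) :
    l1SubL2Objective α lam y (fun i => |ρ i|) ≤ l1SubL2Objective α lam y ρ := by
  have hfid : ∑ i, (|ρ i| - y i) ^ 2 ≤ ∑ i, (ρ i - y i) ^ 2 :=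
    sum_le_sum fun i _ => sq_abs_sub_le_sq_sub (hy i)
  simp only [l1SubL2Objective, abs_abs, sq_abs]
  gcongr

end Objective

theorem stmt4_general (n : ℕ) (y : Fin n → ℝ) (hy : ∀ i, 0 ≤ y i)
    (lam α : ℝ) (hlam : 0 < lam) :
    (⨅ ρ : Fin n → ℝ,
      ((∑ i, |ρ i|) - α * Real.sqrt (∑ i, (ρ i) ^ 2) +
        (1 / (2 * lam)) * ∑ i, (ρ i - y i) ^ 2)) =
    ⨅ ρ : {ρ : Fin n → ℝ // ∀ i, 0 ≤ ρ i},
      ((∑ i, |ρ.1 i|) - α * Real.sqrt (∑ i, (ρ.1 i) ^ 2) +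
        (1 / (2 * lam)) * ∑ i, (ρ.1 i - y i) ^ 2) :=
  iInf_eq_iInf_subtype_of_forall_exists_le (l1SubL2Objective α lam y) fun ρ =>
    ⟨fun i => |ρ i|, fun i => abs_nonneg (ρ i), l1SubL2Objective_abs_le hy α hlam.le ρ⟩

/-- For nonnegative data `y`, the minimum of
`ρ ↦ ‖ρ‖₁ - α‖ρ‖₂ + (1/(2λ))‖ρ - y‖₂²` over all of `ℝⁿ` equals the minimum over
the nonnegative orthant. -/
theorem stmt4 (n : ℕ) (y : Fin n → ℝ) (hy : ∀ i, 0 ≤ y i)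
    (lam α : ℝ) (hlam : 0 < lam) (hα : α ∈ Set.Icc (0 : ℝ) 1) :
    (⨅ ρ : Fin n → ℝ,
      ((∑ i, |ρ i|) - α * Real.sqrt (∑ i, (ρ i) ^ 2) +
        (1 / (2 * lam)) * ∑ i, (ρ i - y i) ^ 2)) =
    ⨅ ρ : {ρ : Fin n → ℝ // ∀ i, 0 ≤ ρ i},
      ((∑ i, |ρ.1 i|) - α * Real.sqrt (∑ i, (ρ.1 i) ^ 2) +
        (1 / (2 * lam)) * ∑ i, (ρ.1 i - y i) ^ 2) :=
  stmt4_general n y hy lam α hlam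
end

section
/- Let β₁ > 0, and for each j let u_j, Λ_j, f_j ∈ ℂ^{m²} with u_j = (√{d_j} + β₁|f_j − Λ_j/β₁|)/(1+β₁) ∘ sign(f_j − Λ_j/β₁) for some nonnegative vector d_j. Then (1+β₁)‖u_j‖₂ + β₁‖f_j‖₂ ≥ ‖Λ_j‖₂. -/
open Finset

/-- For the AGM `u`-update
`u = ((√d + β₁|f - Λ/β₁|)/(1+β₁)) ∘ sign(f - Λ/β₁)`, one has
`(1+β₁)‖u‖₂ + β₁‖f‖₂ ≥ ‖Λ‖₂`. -/
theorem stmt10 (M : ℕ) (β₁ : ℝ) (hβ : 0 < β₁)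
    (u Λ f : Fin M → ℂ) (d : Fin M → ℝ) (hd : ∀ i, 0 ≤ d i)
    (s : Fin M → ℂ) (hs : ∀ i, ‖s i‖ ≤ 1)
    (hs' : ∀ i, f i - Λ i / (β₁ : ℂ) ≠ 0 →
      s i = (f i - Λ i / (β₁ : ℂ)) / (‖f i - Λ i / (β₁ : ℂ)‖ : ℂ))
    (hu : ∀ i, u i =
      (((Real.sqrt (d i) + β₁ * ‖f i - Λ i / (β₁ : ℂ)‖) / (1 + β₁) : ℝ) : ℂ) * s i) :
    Real.sqrt (∑ i, ‖Λ i‖ ^ 2) ≤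
      (1 + β₁) * Real.sqrt (∑ i, ‖u i‖ ^ 2) +
        β₁ * Real.sqrt (∑ i, ‖f i‖ ^ 2) := by
  have hβ1 : (0:ℝ) < 1 + β₁ := by linarith
  have key : ∀ i, ‖Λ i‖ ≤ (1 + β₁) * ‖u i‖ + β₁ * ‖f i‖ := by
    intro i
    by_cases h : f i - Λ i / (β₁ : ℂ) = 0
    · have hΛ : Λ i = (β₁ : ℂ) * f i := by
        have hβne : (β₁ : ℂ) ≠ 0 := Complex.ofReal_ne_zero.mpr hβ.ne'
        rw [sub_eq_zero] at h
        rw [h, mul_comm]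
        exact (div_mul_cancel₀ _ hβne).symm
      have : ‖Λ i‖ = β₁ * ‖f i‖ := by
        rw [hΛ, norm_mul, Complex.norm_real, Real.norm_eq_abs, abs_of_pos hβ]
      rw [this]
      have : 0 ≤ (1 + β₁) * ‖u i‖ := by positivity
      linarith
    · set r := ‖f i - Λ i / (β₁ : ℂ)‖ with hr
      have hrpos : 0 < r := norm_pos_iff.mpr h
      have hsi : ‖s i‖ = 1 := by
        rw [hs' i h, norm_div, Complex.norm_real, Real.norm_eq_abs, abs_of_pos hrpos, ← hr, div_self hrpos.ne']
      have hui : ‖u i‖ = (Real.sqrt (d i) + β₁ * r) / (1 + β₁) := by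
        rw [hu i, norm_mul, hsi, mul_one, Complex.norm_real, Real.norm_eq_abs, abs_of_nonneg]
        positivity
      have h1 : β₁ * r ≤ (1 + β₁) * ‖u i‖ := by
        rw [hui, mul_div_cancel₀ _ hβ1.ne']
        have := Real.sqrt_nonneg (d i)
        linarith
      have h2 : ‖Λ i‖ ≤ β₁ * ‖f i‖ + β₁ * r := by
        have hβne : (β₁ : ℂ) ≠ 0 := Complex.ofReal_ne_zero.mpr hβ.ne'
        have : (Λ i : ℂ) = (β₁ : ℂ) * f i - (β₁ : ℂ) * (f i - Λ i / (β₁ : ℂ)) := by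
          rw [mul_sub, mul_div_cancel₀ _ hβne]; ring
        calc ‖Λ i‖ = ‖(β₁:ℂ) * f i - (β₁:ℂ) * (f i - Λ i / (β₁:ℂ))‖ := by rw [← this]
          _ ≤ ‖(β₁:ℂ) * f i‖ + ‖(β₁:ℂ) * (f i - Λ i / (β₁:ℂ))‖ := by
              exact (norm_sub_le _ _)
          _ = β₁ * ‖f i‖ + β₁ * r := by
              rw [norm_mul, norm_mul, Complex.norm_real, Real.norm_eq_abs, abs_of_pos hβ]
      linarith
  -- Minkowski via EuclideanSpace
  let A : EuclideanSpace ℝ (Fin M) := WithLp.toLp 2 (fun i => (1 + β₁) * ‖u i‖)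
  let B : EuclideanSpace ℝ (Fin M) := WithLp.toLp 2 (fun i => β₁ * ‖f i‖)
  have hnorm : ∀ (x : EuclideanSpace ℝ (Fin M)), ‖x‖ = Real.sqrt (∑ i, x i ^ 2) := by
    intro x
    rw [EuclideanSpace.norm_eq]
    congr 1; apply Finset.sum_congr rfl; intro i _; rw [Real.norm_eq_abs, sq_abs]
  have step1 : Real.sqrt (∑ i, ‖Λ i‖ ^ 2) ≤ ‖A + B‖ := by
    rw [hnorm]
    apply Real.sqrt_le_sqrt
    apply Finset.sum_le_sum
    intro i _
    have : (A + B) i = (1 + β₁) * ‖u i‖ + β₁ * ‖f i‖ := rfl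
    rw [this]
    apply pow_le_pow_left₀ (by positivity) (key i)
  have step2 : ‖A + B‖ ≤ ‖A‖ + ‖B‖ := norm_add_le A B
  have hA : ‖A‖ = (1 + β₁) * Real.sqrt (∑ i, ‖u i‖ ^ 2) := by
    rw [hnorm, ← Real.sqrt_sq hβ1.le, ← Real.sqrt_mul (sq_nonneg _), Finset.mul_sum]
    congr 1; apply Finset.sum_congr rfl; intro i _; show ((1+β₁) * ‖u i‖)^2 = _; ring
  have hB : ‖B‖ = β₁ * Real.sqrt (∑ i, ‖f i‖ ^ 2) := by
    rw [hnorm, ← Real.sqrt_sq hβ.le, ← Real.sqrt_mul (sq_nonneg _), Finset.mul_sum]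
    congr 1; apply Finset.sum_congr rfl; intro i _; show (β₁ * ‖f i‖)^2 = _; ring
  calc Real.sqrt (∑ i, ‖Λ i‖ ^ 2) ≤ ‖A + B‖ := step1
    _ ≤ ‖A‖ + ‖B‖ := step2
    _ = _ := by rw [hA, hB]
end

section
/- Let β₁ > 0, d ∈ ℝ_{≥0}, a ∈ ℂ, and define u = ((β₁|a| + √{(β₁|a|)² + 4(1+β₁)d})/(2(1+β₁)))·sign(a) when a ≠ 0 (with sign(a) = a/|a|). Then u minimizes the function u' ↦ (1/β₁)·(1/2)(|u'|² − d·log|u'|²) + (1/2)|u' − a|² over ℂ \ {0}. -/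
/-- Closed-form proximal operator for the intensity Poisson metric:
`u = ((β₁|a| + √((β₁|a|)² + 4(1+β₁)d))/(2(1+β₁)))·sign(a)` minimizes
`u' ↦ (1/β₁)(1/2)(|u'|² - d log|u'|²) + (1/2)|u' - a|²` over `ℂ \ {0}`. -/
theorem stmt18 (β₁ : ℝ) (hβ : 0 < β₁) (d : ℝ) (hd : 0 ≤ d) (a : ℂ) (ha : a ≠ 0)
    (u : ℂ)
    (hu : u = (((β₁ * ‖a‖ +
        Real.sqrt ((β₁ * ‖a‖) ^ 2 + 4 * (1 + β₁) * d)) /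
        (2 * (1 + β₁)) : ℝ) : ℂ) * (a / ((‖a‖ : ℝ) : ℂ))) :
    ∀ u' : ℂ, u' ≠ 0 →
      (1 / β₁) * ((1 / 2) * (‖u‖ ^ 2 - d * Real.log (‖u‖ ^ 2))) +
          (1 / 2) * ‖u - a‖ ^ 2 ≤
        (1 / β₁) * ((1 / 2) * (‖u'‖ ^ 2 - d * Real.log (‖u'‖ ^ 2))) +
          (1 / 2) * ‖u' - a‖ ^ 2 := by
  intro u' hu'
  set A := ‖a‖ with hA
  have hA0 : 0 < A := by simpa [hA] using (norm_pos_iff.mpr ha)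
  set S := Real.sqrt ((β₁ * A) ^ 2 + 4 * (1 + β₁) * d) with hS
  have hS0 : 0 ≤ S := Real.sqrt_nonneg _
  have hSsq : S ^ 2 = (β₁ * A) ^ 2 + 4 * (1 + β₁) * d := by
    rw [hS, Real.sq_sqrt]
    nlinarith [mul_pos hβ hA0]
  set r₀ : ℝ := (β₁ * A + S) / (2 * (1 + β₁)) with hr₀
  have h1β : (0:ℝ) < 1 + β₁ := by linarith
  have hr₀pos : 0 < r₀ := by
    apply div_pos
    · nlinarith [mul_pos hβ hA0]
    · linarith
  -- key quadratic identity
  have hkey : (1 + β₁) * r₀ ^ 2 = β₁ * A * r₀ + d := by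
    have h2 : (2 * (1 + β₁)) ≠ 0 := by positivity
    rw [hr₀]
    field_simp
    nlinarith [hSsq]
  -- |u| = r₀
  have habs_u : ‖u‖ = r₀ := by
    rw [hu]
    rw [norm_mul, norm_div, Complex.norm_real, Complex.norm_real, Real.norm_eq_abs, Real.norm_eq_abs, ← hA]
    rw [abs_of_nonneg hA0.le]
    rw [abs_of_nonneg hr₀pos.le]
    field_simp
  -- |u - a| = |r₀ - A|
  have habs_ua : ‖u - a‖ ^ 2 = (r₀ - A) ^ 2 := by
    have : u - a = (((r₀ - A) / A : ℝ) : ℂ) * a := by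
      rw [hu]
      have hAne : (A:ℂ) ≠ 0 := by exact_mod_cast hA0.ne'
      push_cast
      field_simp
    rw [this, norm_mul, Complex.norm_real, Real.norm_eq_abs, ← hA]
    rw [abs_div, abs_of_nonneg hA0.le, div_mul_cancel₀ _ hA0.ne']
    exact sq_abs _
  set r : ℝ := ‖u'‖ with hr
  have hrpos : 0 < r := by simpa [hr] using norm_pos_iff.mpr hu'
  -- |u' - a| ≥ |r - A|
  have habs_u'a : (r - A) ^ 2 ≤ ‖u' - a‖ ^ 2 := by
    have h := abs_norm_sub_norm_le u' a
    calc (r - A) ^ 2 = |r - A| ^ 2 := (sq_abs _).symm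
      _ ≤ ‖u' - a‖ ^ 2 := pow_le_pow_left₀ (abs_nonneg _) h 2
  -- log inequality
  have hlog : Real.log (r ^ 2) - Real.log (r₀ ^ 2) ≤ r ^ 2 / r₀ ^ 2 - 1 := by
    have hpos : 0 < r ^ 2 / r₀ ^ 2 := by positivity
    have := Real.log_le_sub_one_of_pos hpos
    rwa [Real.log_div (by positivity) (by positivity)] at this
  have hdlog2 : d * (Real.log (r ^ 2) - Real.log (r₀ ^ 2)) * r₀ ^ 2 ≤ d * (r ^ 2 - r₀ ^ 2) := by
    have h := mul_le_mul_of_nonneg_right (mul_le_mul_of_nonneg_left hlog hd) (sq_nonneg r₀)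
    have hr₀2 : r₀ ^ 2 ≠ 0 := by positivity
    calc d * (Real.log (r ^ 2) - Real.log (r₀ ^ 2)) * r₀ ^ 2
        ≤ d * (r ^ 2 / r₀ ^ 2 - 1) * r₀ ^ 2 := h
      _ = d * (r ^ 2 - r₀ ^ 2) := by field_simp
  rw [habs_u, habs_ua]
  have hmain : (r₀ ^ 2 - d * Real.log (r₀ ^ 2)) + β₁ * (r₀ - A) ^ 2 ≤
      (r ^ 2 - d * Real.log (r ^ 2)) + β₁ * (r - A) ^ 2 := by
    nlinarith [hdlog2, hkey, sq_nonneg (r - r₀), mul_pos hr₀pos hr₀pos,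
      mul_nonneg (mul_nonneg hβ.le hA0.le) (mul_nonneg hr₀pos.le (sq_nonneg (r - r₀)))]
  have heq1 : ∀ P Q : ℝ, (1 / β₁) * ((1 / 2) * P) + (1 / 2) * Q
      = (1 / (2 * β₁)) * (P + β₁ * Q) := by
    intro P Q; field_simp
  rw [heq1, heq1]
  have h2β : (0:ℝ) ≤ 1 / (2 * β₁) := by positivity
  calc (1 / (2 * β₁)) * ((r₀ ^ 2 - d * Real.log (r₀ ^ 2)) + β₁ * (r₀ - A) ^ 2)
      ≤ (1 / (2 * β₁)) * ((r ^ 2 - d * Real.log (r ^ 2)) + β₁ * (r - A) ^ 2) :=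
        mul_le_mul_of_nonneg_left hmain h2β
    _ ≤ _ := by
        apply mul_le_mul_of_nonneg_left _ h2β
        nlinarith [habs_u'a]
end

section
/- Let β₁ > 0, d ∈ ℝ_{≥0}, a ∈ ℂ with a ≠ 0, and define u = ((√d + β₁|a|)/(1+β₁))·sign(a), where sign(a) = a/|a|. Then u minimizes the function u' ↦ (1/β₁)·(1/2)(|u'| − √d)² + (1/2)|u' − a|² over ℂ. -/
/-- Closed-form proximal operator for the amplitude Gaussian metric:
`u = ((√d + β₁|a|)/(1+β₁))·sign(a)` minimizes
`u' ↦ (1/β₁)(1/2)(|u'| - √d)² + (1/2)|u' - a|²` over `ℂ`. -/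
theorem stmt19 (β₁ : ℝ) (hβ : 0 < β₁) (d : ℝ) (hd : 0 ≤ d) (a : ℂ) (ha : a ≠ 0)
    (u : ℂ)
    (hu : u = (((Real.sqrt d + β₁ * ‖a‖) / (1 + β₁) : ℝ) : ℂ) *
      (a / (‖a‖ : ℂ))) :
    ∀ u' : ℂ,
      (1 / β₁) * ((1 / 2) * (‖u‖ - Real.sqrt d) ^ 2) +
          (1 / 2) * ‖u - a‖ ^ 2 ≤
        (1 / β₁) * ((1 / 2) * (‖u'‖ - Real.sqrt d) ^ 2) +
          (1 / 2) * ‖u' - a‖ ^ 2 := by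
  intro u'
  set A := ‖a‖ with hA
  have hApos : 0 < A := by simpa [hA] using (norm_pos_iff.mpr ha)
  set s := Real.sqrt d with hs
  have hs0 : 0 ≤ s := Real.sqrt_nonneg d
  set r : ℝ := (s + β₁ * A) / (1 + β₁) with hr
  have hr0 : 0 ≤ r := by
    apply div_nonneg
    · positivity
    · linarith
  have hAne : (A : ℂ) ≠ 0 := by exact_mod_cast hApos.ne'
  have hu2 : u = ((((r - A) / A : ℝ) : ℂ) + 1) * a := by
    rw [hu]
    push_cast
    field_simp
    ring
  have habsu : ‖u‖ = r := by
    rw [hu]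
    rw [norm_mul, norm_div, Complex.norm_real, Complex.norm_real, Real.norm_eq_abs, Real.norm_eq_abs]
    rw [abs_of_nonneg hr0, abs_of_nonneg hApos.le]
    field_simp
    rw [← hA]
  have habsua : ‖u - a‖ = |r - A| := by
    have : u - a = (((r - A) / A : ℝ) : ℂ) * a := by rw [hu2]; ring
    rw [this, norm_mul, Complex.norm_real, Real.norm_eq_abs, abs_div, abs_of_nonneg hApos.le]
    field_simp
    rw [← hA]; ring
  set t := ‖u'‖ with ht
  have ht0 : 0 ≤ t := norm_nonneg u'
  have h1 : |t - A| ≤ ‖u' - a‖ := by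
    simpa [ht, hA] using abs_norm_sub_norm_le u' a
  have h2 : (t - A) ^ 2 ≤ ‖u' - a‖ ^ 2 := by
    rw [← sq_abs]
    exact pow_le_pow_left₀ (abs_nonneg _) h1 2
  have key : (1 / β₁) * ((1 / 2) * (r - s) ^ 2) + (1 / 2) * (r - A) ^ 2 ≤
      (1 / β₁) * ((1 / 2) * (t - s) ^ 2) + (1 / 2) * (t - A) ^ 2 := by
    have hsum : 0 < 1 + β₁ := by linarith
    have hrdef : r * (1 + β₁) = s + β₁ * A := by
      rw [hr]; field_simp
    have h : (1 / β₁) * ((1 / 2) * (t - s) ^ 2) + (1 / 2) * (t - A) ^ 2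
        - ((1 / β₁) * ((1 / 2) * (r - s) ^ 2) + (1 / 2) * (r - A) ^ 2)
        = (1 / (2 * β₁)) * ((1 + β₁) * (t - r) ^ 2) := by
      have hbne : β₁ ≠ 0 := hβ.ne'
      rw [hr]
      field_simp
      ring
    have hpos : 0 ≤ (1 / (2 * β₁)) * ((1 + β₁) * (t - r) ^ 2) := by positivity
    linarith
  have habsua2 : ‖u - a‖ ^ 2 = (r - A) ^ 2 := by
    rw [habsua, sq_abs]
  rw [habsu, habsua2]
  have h3 : (1/2 : ℝ) * (t - A) ^ 2 ≤ (1/2) * ‖u' - a‖ ^ 2 := by linarith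
  calc (1 / β₁) * ((1 / 2) * (r - s) ^ 2) + (1 / 2) * (r - A) ^ 2
      ≤ (1 / β₁) * ((1 / 2) * (t - s) ^ 2) + (1 / 2) * (t - A) ^ 2 := key
    _ ≤ (1 / β₁) * ((1 / 2) * (t - s) ^ 2) + (1 / 2) * ‖u' - a‖ ^ 2 := by linarith
end
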